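/- Let a : ℝ → GL(n, ℂ) be a smooth map with a(s) − Id rapidly decreasing as |s| → ∞ together with all derivatives (so det∘a − 1 vanishes at infinity). Then the winding number wn(det∘a) = (1/2πi) ∫_ℝ tr(a(s)^{-1} a'(s)) ds is an integer. -/

import Mathlib

open MeasureTheory

/-- The entrywise derivative of a matrix-valued function of a real variable. -/
noncomputable def matDeriv {n : ℕ} (a : ℝ → Matrix (Fin n) (Fin n) ℂ) (s : ℝ) :
    Matrix (Fin n) (Fin n) ℂ :=
  Matrix.of fun i j => deriv (fun t => a t i j) s

open Filter

/-- Jacobi's formula: the derivative of `det (M t)` is `tr (adj (M s) * M' s)`. -/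
lemma jacobi_formula {n : ℕ} {M : ℝ → Matrix (Fin n) (Fin n) ℂ}
    {B : Matrix (Fin n) (Fin n) ℂ} {s : ℝ}
    (h : ∀ i j, HasDerivAt (fun t => M t i j) (B i j) s) :
    HasDerivAt (fun t => (M t).det) ((Matrix.adjugate (M s) * B).trace) s := by
  have hd : HasDerivAt (fun t => (M t).det)
      (∑ σ : Equiv.Perm (Fin n), ((Equiv.Perm.sign σ : ℤ) : ℂ) *
        ∑ i, (∏ j ∈ Finset.univ.erase i, M s (σ j) j) • B (σ i) i) s := by
    simp only [Matrix.det_apply']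
    exact HasDerivAt.fun_sum fun σ _ =>
      (HasDerivAt.fun_finsetProd fun j _ => h (σ j) j).const_mul _
  convert hd using 1
  have step1 : ∀ i, (Matrix.adjugate (M s) * B) i i
      = Matrix.cramer (M s) (fun r => B r i) i := by
    intro i
    rw [Matrix.cramer_eq_adjugate_mulVec, Matrix.mulVec, Matrix.mul_apply]
    rfl
  have step2 : ∀ i, Matrix.cramer (M s) (fun r => B r i) i
      = ∑ σ : Equiv.Perm (Fin n), ((Equiv.Perm.sign σ : ℤ) : ℂ) *
          ((∏ j ∈ Finset.univ.erase i, M s (σ j) j) * B (σ i) i) := by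
    intro i
    rw [Matrix.cramer_apply, Matrix.det_apply']
    refine Finset.sum_congr rfl fun σ _ => ?_
    congr 1
    rw [← Finset.mul_prod_erase _ _ (Finset.mem_univ i)]
    rw [mul_comm]
    congr 1
    · exact Finset.prod_congr rfl fun j hj =>
        Matrix.updateCol_ne (Finset.ne_of_mem_erase hj)
    · exact Matrix.updateCol_self ..
  calc (Matrix.adjugate (M s) * B).trace
      = ∑ i, (Matrix.adjugate (M s) * B) i i := rfl
    _ = ∑ i, ∑ σ : Equiv.Perm (Fin n), ((Equiv.Perm.sign σ : ℤ) : ℂ) *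
          ((∏ j ∈ Finset.univ.erase i, M s (σ j) j) * B (σ i) i) := by
        simp_rw [step1, step2]
    _ = _ := by
        rw [Finset.sum_comm]
        exact Finset.sum_congr rfl fun σ _ => by rw [Finset.mul_sum]; simp [smul_eq_mul]

lemma bounded_of_tendsto {f : ℝ → ℂ} (hf : Continuous f) {c c' : ℂ}
    (h1 : Tendsto f atTop (nhds c)) (h2 : Tendsto f atBot (nhds c')) :
    ∃ C : ℝ, ∀ s, ‖f s‖ ≤ C := by
  obtain ⟨A, hA⟩ := eventually_atTop.mp
    (h1.norm.eventually (eventually_le_nhds (lt_add_one ‖c‖)))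
  obtain ⟨B, hB⟩ := eventually_atBot.mp
    (h2.norm.eventually (eventually_le_nhds (lt_add_one ‖c'‖)))
  obtain ⟨C, hC⟩ := (isCompact_Icc (a := B) (b := A)).exists_bound_of_continuousOn
    hf.continuousOn
  refine ⟨max C (max (‖c‖ + 1) (‖c'‖ + 1)), fun s => ?_⟩
  rcases le_total s B with h | h
  · exact le_trans (hB s h) (le_max_of_le_right (le_max_right _ _))
  rcases le_total A s with h' | h'
  · exact le_trans (hA s h') (le_max_of_le_right (le_max_left _ _))
  · exact le_trans (hC s ⟨h, h'⟩) (le_max_left _ _)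

lemma lower_bound_of_tendsto {f : ℝ → ℂ} (hf : Continuous f) (hne : ∀ s, f s ≠ 0)
    (h1 : Tendsto f atTop (nhds 1)) (h2 : Tendsto f atBot (nhds 1)) :
    ∃ c : ℝ, 0 < c ∧ ∀ s, c ≤ ‖f s‖ := by
  have h12 : (1:ℝ)/2 < ‖(1:ℂ)‖ := by norm_num
  obtain ⟨A, hA⟩ := eventually_atTop.mp (h1.norm.eventually (eventually_ge_nhds h12))
  obtain ⟨B, hB⟩ := eventually_atBot.mp (h2.norm.eventually (eventually_ge_nhds h12))
  rcases le_total A B with hAB | hAB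
  · refine ⟨1/2, by norm_num, fun s => ?_⟩
    rcases le_total s B with h | h
    · exact hB s h
    · exact hA s (le_trans hAB h)
  · have hne' : (Set.Icc B A).Nonempty := Set.nonempty_Icc.mpr hAB
    obtain ⟨x, hx, hmin⟩ := (isCompact_Icc (a := B) (b := A)).exists_isMinOn hne'
      hf.norm.continuousOn
    refine ⟨min (1/2) ‖f x‖, lt_min (by norm_num) (norm_pos_iff.mpr (hne x)), fun s => ?_⟩
    rcases le_total s B with h | h
    · exact le_trans (min_le_left _ _) (hB s h)
    rcases le_total A s with h' | h'
    · exact le_trans (min_le_left _ _) (hA s h')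
    · exact le_trans (min_le_right _ _) (hmin ⟨h, h'⟩)

/-- For a smooth map `a : ℝ → GL(n,ℂ)` with `a − Id` rapidly decreasing together with
all derivatives, the winding number
`wn(det ∘ a) = (1/2πi) ∫ℝ tr(a(s)⁻¹ a'(s)) ds` is an integer. -/
theorem winding_number_integer {n : ℕ}
    (a : ℝ → Matrix (Fin n) (Fin n) ℂ)
    (hsmooth : ∀ i j, ContDiff ℝ (⊤ : ℕ∞) fun s => a s i j)
    (hinv : ∀ s, IsUnit (a s))
    (hdecay : ∀ (k m : ℕ) (i j : Fin n), ∃ C : ℝ, ∀ s : ℝ,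
      |s| ^ k * ‖iteratedDeriv m (fun t => (a t - 1) i j) s‖ ≤ C) :
    ∃ w : ℤ,
      (1 / (2 * Real.pi * Complex.I)) *
        ∫ s : ℝ, Matrix.trace ((a s)⁻¹ * matDeriv a s) = (w : ℂ) := by
  classical
  -- continuity facts
  have haentry : ∀ i j, Continuous fun s => a s i j := fun i j => (hsmooth i j).continuous
  have hacont : Continuous a := continuous_pi fun i => continuous_pi fun j => haentry i j
  have hmdentry : ∀ i j, Continuous fun s => matDeriv a s i j := fun i j => by
    simpa [matDeriv] using (hsmooth i j).continuous_deriv (by simp)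
  have hmdcont : Continuous fun s => matDeriv a s :=
    continuous_pi fun i => continuous_pi fun j => hmdentry i j
  have hder : ∀ (s : ℝ) i j, HasDerivAt (fun t => a t i j) (matDeriv a s i j) s := by
    intro s i j
    simpa [matDeriv] using
      (((hsmooth i j).differentiable (by simp)) s).hasDerivAt
  -- the determinant and its derivative
  set f : ℝ → ℂ := fun s => (a s).det with hf_def
  set T : ℝ → ℂ := fun s => (Matrix.adjugate (a s) * matDeriv a s).trace with hT_def
  have hfT : ∀ s, HasDerivAt f (T s) s := fun s => jacobi_formula (hder s)
  have hfne : ∀ s, f s ≠ 0 := fun s =>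
    ((Matrix.isUnit_iff_isUnit_det _).mp (hinv s)).ne_zero
  have hfcont : Continuous f := hacont.matrix_det
  have hadjcont : Continuous fun s => Matrix.adjugate (a s) := hacont.matrix_adjugate
  have hTcont : Continuous T := (hadjcont.matrix_mul hmdcont).matrix_trace
  -- a → 1 at ±∞
  have hatend : ∀ l : Filter ℝ, Tendsto (fun s : ℝ => |s|) l atTop →
      Tendsto a l (nhds 1) := by
    intro l hl
    refine tendsto_pi_nhds.mpr ?_
    intro i
    rw [tendsto_pi_nhds]
    intro j
    obtain ⟨C, hC⟩ := hdecay 1 0 i j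
    simp only [iteratedDeriv_zero, pow_one] at hC
    have hzero : Tendsto (fun s => (a s - 1) i j) l (nhds 0) := by
      have hbound : ∀ᶠ s : ℝ in l, ‖(a s - 1) i j‖ ≤ C * |s|⁻¹ := by
        filter_upwards [hl.eventually_ge_atTop 1] with s hs
        have hspos : (0:ℝ) < |s| := lt_of_lt_of_le one_pos hs
        calc ‖(a s - 1) i j‖ = |s|⁻¹ * (|s| * ‖(a s - 1) i j‖) := by
              field_simp
          _ ≤ |s|⁻¹ * C := by
              exact mul_le_mul_of_nonneg_left (hC s) (inv_nonneg.mpr hspos.le)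
          _ = C * |s|⁻¹ := mul_comm _ _
      have hg0 : Tendsto (fun s : ℝ => C * |s|⁻¹) l (nhds 0) := by
        have := (tendsto_inv_atTop_zero.comp hl).const_mul C
        simpa using this
      exact squeeze_zero_norm' hbound hg0
    have : (fun s => a s i j) = fun s => (a s - 1) i j + (1 : Matrix (Fin n) (Fin n) ℂ) i j := by
      funext s; simp [Matrix.sub_apply]
    rw [this]
    have h2 := hzero.add (tendsto_const_nhds (x := (1 : Matrix (Fin n) (Fin n) ℂ) i j))
    rwa [zero_add] at h2
  have hatop : Tendsto a atTop (nhds 1) := hatend _ tendsto_abs_atTop_atTop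
  have habot : Tendsto a atBot (nhds 1) := hatend _ tendsto_abs_atBot_atTop
  have hdet_tendsto : ∀ {l : Filter ℝ}, Tendsto a l (nhds 1) → Tendsto f l (nhds 1) := by
    intro l h
    have := ((continuous_id.matrix_det).tendsto (1 : Matrix (Fin n) (Fin n) ℂ)).comp h
    simpa [Function.comp_def] using this
  have hftop : Tendsto f atTop (nhds 1) := hdet_tendsto hatop
  have hfbot : Tendsto f atBot (nhds 1) := hdet_tendsto habot
  -- adjugate entries are bounded
  have hadj_tend : ∀ {l : Filter ℝ}, Tendsto a l (nhds 1) →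
      Tendsto (fun s => Matrix.adjugate (a s)) l
        (nhds (1 : Matrix (Fin n) (Fin n) ℂ)) := by
    intro l h
    have := ((continuous_id.matrix_adjugate).tendsto (1 : Matrix (Fin n) (Fin n) ℂ)).comp h
    simpa [Function.comp_def, Matrix.adjugate_one] using this
  have hadjbd : ∀ i j, ∃ K, ∀ s, ‖Matrix.adjugate (a s) i j‖ ≤ K := by
    intro i j
    have hc : Continuous fun s => Matrix.adjugate (a s) i j :=
      (continuous_apply j).comp ((continuous_apply i).comp hadjcont)
    have h1 := tendsto_pi_nhds.mp (tendsto_pi_nhds.mp (hadj_tend hatop) i) j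
    have h2 := tendsto_pi_nhds.mp (tendsto_pi_nhds.mp (hadj_tend habot) i) j
    exact bounded_of_tendsto hc h1 h2
  -- matDeriv entries are integrable
  have hmdint : ∀ i j, Integrable fun s => matDeriv a s i j := by
    intro i j
    obtain ⟨C0, hC0⟩ := hdecay 0 1 i j
    obtain ⟨C2, hC2⟩ := hdecay 2 1 i j
    have hkey : ∀ s : ℝ, iteratedDeriv 1 (fun t => (a t - 1) i j) s = matDeriv a s i j := by
      intro s
      rw [iteratedDeriv_one]
      have : (fun t => (a t - 1) i j)
          = fun t => a t i j - (1 : Matrix (Fin n) (Fin n) ℂ) i j := by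
        funext t; simp [Matrix.sub_apply]
      rw [this, deriv_sub_const]
      rfl
    have hbd : ∀ s : ℝ, ‖matDeriv a s i j‖ ≤ (C0 + C2) * (1 + s ^ 2)⁻¹ := by
      intro s
      have h0 := hC0 s; have h2 := hC2 s
      rw [hkey s] at h0 h2
      simp only [pow_zero, one_mul] at h0
      rw [sq_abs] at h2
      have hpos : (0:ℝ) < 1 + s ^ 2 := by positivity
      rw [mul_comm, inv_mul_eq_div, le_div_iff₀ hpos]
      nlinarith [norm_nonneg (matDeriv a s i j)]
    exact (integrable_inv_one_add_sq.const_mul (C0 + C2)).mono'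
      (hmdentry i j).aestronglyMeasurable (ae_of_all _ hbd)
  have hprod : ∀ i j, Integrable fun s => Matrix.adjugate (a s) i j * matDeriv a s j i := by
    intro i j
    obtain ⟨K, hK⟩ := hadjbd i j
    exact (hmdint j i).bdd_mul
      ((continuous_apply j).comp ((continuous_apply i).comp hadjcont)).aestronglyMeasurable
      (ae_of_all _ hK)
  have hTint : Integrable T := by
    have hTeq : T = fun s => ∑ i, ∑ j, Matrix.adjugate (a s) i j * matDeriv a s j i := by
      funext s
      simp [hT_def, Matrix.trace, Matrix.diag, Matrix.mul_apply]
    rw [hTeq]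
    exact integrable_finset_sum _ fun i _ => integrable_finset_sum _ fun j _ => hprod i j
  -- the logarithmic derivative g
  obtain ⟨c, hc0, hc⟩ := lower_bound_of_tendsto hfcont hfne hftop hfbot
  set g : ℝ → ℂ := fun s => (f s)⁻¹ * T s with hg_def
  have hgcont : Continuous g := (hfcont.inv₀ hfne).mul hTcont
  have hgint : Integrable g := by
    refine (hTint.norm.const_mul c⁻¹).mono' hgcont.aestronglyMeasurable
      (ae_of_all _ fun s => ?_)
    rw [hg_def]
    simp only [norm_mul, norm_inv]
    refine mul_le_mul_of_nonneg_right ?_ (norm_nonneg _)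
    exact inv_anti₀ hc0 (hc s)
  have hgf : ∀ s, g s * f s = T s := by
    intro s
    show (f s)⁻¹ * T s * f s = T s
    rw [inv_mul_eq_div, div_mul_cancel₀ _ (hfne s)]
  -- the antiderivative F
  set F : ℝ → ℂ := fun s => ∫ t in (0:ℝ)..s, g t with hF_def
  have hFd : ∀ s, HasDerivAt F (g s) s := fun s =>
    intervalIntegral.integral_hasDerivAt_right hgint.intervalIntegrable
      ⟨Set.univ, Filter.univ_mem, hgcont.aestronglyMeasurable.restrict⟩
      hgcont.continuousAt
  have hh : ∀ s, HasDerivAt (fun t => Complex.exp (-F t) * f t) 0 s := by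
    intro s
    have e1 : HasDerivAt (fun t => Complex.exp (-F t)) (Complex.exp (-F s) * (-g s)) s :=
      ((hFd s).neg).cexp
    have e2 := e1.fun_mul (hfT s)
    refine e2.congr_deriv ?_
    rw [← hgf s]
    ring
  have hconst : ∀ s, Complex.exp (-F s) * f s = f 0 := by
    intro s
    have := is_const_of_deriv_eq_zero (f := fun t => Complex.exp (-F t) * f t)
      (fun x => (hh x).differentiableAt) (fun x => (hh x).deriv) s 0
    simpa [hF_def, intervalIntegral.integral_same] using this
  have hfs : ∀ s, f s = f 0 * Complex.exp (F s) := by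
    intro s
    calc f s = Complex.exp (F s) * (Complex.exp (-F s) * f s) := by
          rw [← mul_assoc, ← Complex.exp_add]; simp
      _ = f 0 * Complex.exp (F s) := by rw [hconst s]; ring
  -- improper integrals
  set Ip := ∫ t in Set.Ioi (0:ℝ), g t with hIp_def
  set Im := ∫ t in Set.Iic (0:ℝ), g t with hIm_def
  have hIp : Tendsto F atTop (nhds Ip) :=
    intervalIntegral_tendsto_integral_Ioi 0 hgint.integrableOn tendsto_id
  have hIm0 : Tendsto (fun s => ∫ t in s..(0:ℝ), g t) atBot (nhds Im) :=
    intervalIntegral_tendsto_integral_Iic 0 hgint.integrableOn tendsto_id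
  have hImF : Tendsto F atBot (nhds (-Im)) := by
    have h := hIm0.neg
    have heq : F = fun s => -∫ t in s..(0:ℝ), g t := by
      funext s; rw [hF_def]; exact intervalIntegral.integral_symm _ _
    rw [heq]; exact h
  have eq1 : f 0 * Complex.exp Ip = 1 := by
    have hlim1 : Tendsto f atTop (nhds (f 0 * Complex.exp Ip)) := by
      have h1 : Tendsto (fun s => f 0 * Complex.exp (F s)) atTop
          (nhds (f 0 * Complex.exp Ip)) :=
        Tendsto.const_mul (f 0) ((Complex.continuous_exp.tendsto Ip).comp hIp)
      have heq : (fun s => f 0 * Complex.exp (F s)) = f := funext fun s => (hfs s).symm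
      rwa [heq] at h1
    exact tendsto_nhds_unique hlim1 hftop
  have eq2 : f 0 * Complex.exp (-Im) = 1 := by
    have hlim2 : Tendsto f atBot (nhds (f 0 * Complex.exp (-Im))) := by
      have h1 : Tendsto (fun s => f 0 * Complex.exp (F s)) atBot
          (nhds (f 0 * Complex.exp (-Im))) :=
        Tendsto.const_mul (f 0) ((Complex.continuous_exp.tendsto (-Im)).comp hImF)
      have heq : (fun s => f 0 * Complex.exp (F s)) = f := funext fun s => (hfs s).symm
      rwa [heq] at h1
    exact tendsto_nhds_unique hlim2 hfbot
  have hsplit : (∫ s : ℝ, g s) = Im + Ip :=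
    (intervalIntegral.integral_Iic_add_Ioi hgint.integrableOn hgint.integrableOn).symm
  have hexp1 : Complex.exp (Im + Ip) = 1 := by
    have hIm' : Complex.exp Im = f 0 := by
      have h := eq2
      rw [Complex.exp_neg, ← div_eq_mul_inv,
        div_eq_one_iff_eq (Complex.exp_ne_zero _)] at h
      exact h.symm
    rw [Complex.exp_add, hIm']
    exact eq1
  obtain ⟨k, hk⟩ := Complex.exp_eq_one_iff.mp hexp1
  refine ⟨k, ?_⟩
  have hintg : (∫ s : ℝ, Matrix.trace ((a s)⁻¹ * matDeriv a s)) = ∫ s : ℝ, g s := by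
    congr 1
    funext s
    rw [Matrix.inv_def, Ring.inverse_eq_inv, smul_mul_assoc, Matrix.trace_smul, smul_eq_mul]
  rw [hintg, hsplit, hk]
  have hpi : (2 * (Real.pi : ℂ) * Complex.I : ℂ) ≠ 0 := by
    simp [Real.pi_ne_zero, Complex.I_ne_zero, Complex.ofReal_ne_zero]
  field_simp
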